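/- arXiv:2407.17320 — 7 statements merged into one kernel-verified Lean document; each statement's English description precedes it below -/
import Mathlib

section
/- Let K be a C-pseudo-cone in ℝⁿ. Then the support function h_K is non-positive on the dual cone C° and strictly negative on the interior of C°. -/
open Set Pointwise RealInnerProductSpace Filter Topology

noncomputable section

/-- The support function of a set `K ⊆ ℝⁿ`, with values in `ℝ ∪ {∞} ⊆ EReal`. -/
def supportFn {n : ℕ} (K : Set (EuclideanSpace ℝ (Fin n))) (u : EuclideanSpace ℝ (Fin n)) :
    EReal :=
  sSup ((fun x => ((⟪u, x⟫ : ℝ) : EReal)) '' K)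

/-- The copolar set `K* = {u : ⟨u,x⟩ ≤ -1 for all x ∈ K}`. -/
def copolar {n : ℕ} (K : Set (EuclideanSpace ℝ (Fin n))) : Set (EuclideanSpace ℝ (Fin n)) :=
  {u | ∀ x ∈ K, ⟪u, x⟫ ≤ (-1 : ℝ)}

/-- The dual cone `C° = {u : ⟨u,x⟩ ≤ 0 for all x ∈ C}`. -/
def dualCone {n : ℕ} (C : Set (EuclideanSpace ℝ (Fin n))) : Set (EuclideanSpace ℝ (Fin n)) :=
  {u | ∀ x ∈ C, ⟪u, x⟫ ≤ (0 : ℝ)}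

/-- The recession cone of `K`. -/
def recessionCone {n : ℕ} (K : Set (EuclideanSpace ℝ (Fin n))) :
    Set (EuclideanSpace ℝ (Fin n)) :=
  {y | ∀ x ∈ K, ∀ t : ℝ, 0 ≤ t → x + t • y ∈ K}

/-- A pseudo-cone: a nonempty closed convex set with `0 ∉ K` and `λK ⊆ K` for `λ ≥ 1`. -/
def IsPseudoCone {n : ℕ} (K : Set (EuclideanSpace ℝ (Fin n))) : Prop :=
  K.Nonempty ∧ IsClosed K ∧ Convex ℝ K ∧ (0 : EuclideanSpace ℝ (Fin n)) ∉ K ∧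
    ∀ lam : ℝ, 1 ≤ lam → lam • K ⊆ K

/-- A pointed closed convex cone with nonempty interior. -/
def IsPointedSolidClosedCone {n : ℕ} (C : Set (EuclideanSpace ℝ (Fin n))) : Prop :=
  IsClosed C ∧ Convex ℝ C ∧ (∀ lam : ℝ, 0 ≤ lam → lam • C ⊆ C) ∧
    (interior C).Nonempty ∧ C ∩ (-C) = {0}

/-- A `C`-pseudo-cone: a pseudo-cone whose recession cone is `C`, where `C` is a
pointed closed convex cone with nonempty interior. -/
def IsCPseudoCone {n : ℕ} (C K : Set (EuclideanSpace ℝ (Fin n))) : Prop :=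
  IsPointedSolidClosedCone C ∧ IsPseudoCone K ∧ recessionCone K = C

/-!
Closedness, convexity and `λK ⊆ K` for `λ ≥ 1` force `K` into its own recession cone `C`,
so `h_K ≤ 0` on `C°`. If a closed ball of radius `ε` about `u` lies in `C°`, then
`⟪u, x⟫ ≤ -ε‖x‖` on `C`; since the closed set `K` misses the origin, `‖x‖ ≥ r > 0` on `K`,
whence `h_K(u) ≤ -εr < 0`.
-/

/- `y + t • x` is the limit, as `μ → 0⁺`, of the convex combinations
`(1 - μ) • y + μ • ((t / μ) • x)` of points of `K`. -/
theorem IsClosed.add_smul_mem_of_convex_of_smul_subset {E : Type*} [AddCommGroup E]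
    [Module ℝ E] [TopologicalSpace E] [ContinuousAdd E] [ContinuousSMul ℝ E] {K : Set E}
    (hcl : IsClosed K) (hconv : Convex ℝ K) (hscale : ∀ lam : ℝ, 1 ≤ lam → lam • K ⊆ K)
    {x y : E} (hx : x ∈ K) (hy : y ∈ K) {t : ℝ} (ht : 0 < t) : y + t • x ∈ K := by
  have hlim : Tendsto (fun μ : ℝ => (1 - μ) • y + t • x) (𝓝[>] 0) (𝓝 (y + t • x)) := by
    have hcont : Continuous fun μ : ℝ => (1 - μ) • y + t • x := by fun_prop
    simpa using hcont.continuousWithinAt.tendsto (x := 0) (s := Ioi 0)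
  refine hcl.mem_of_tendsto hlim ?_
  filter_upwards [Ioo_mem_nhdsGT (lt_min one_pos ht)] with μ ⟨hμ0, hμ⟩
  have hscaled : (t / μ) • x ∈ K :=
    hscale _ ((one_le_div hμ0).mpr (hμ.trans_le (min_le_right _ _)).le) (smul_mem_smul_set hx)
  have hcomb := hconv hy hscaled (sub_nonneg.mpr (hμ.trans_le (min_le_left _ _)).le) hμ0.le
    (sub_add_cancel 1 μ)
  rwa [smul_smul, mul_div_cancel₀ t hμ0.ne'] at hcomb

theorem subset_recessionCone {n : ℕ} {K : Set (EuclideanSpace ℝ (Fin n))}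
    (hcl : IsClosed K) (hconv : Convex ℝ K) (hscale : ∀ lam : ℝ, 1 ≤ lam → lam • K ⊆ K) :
    K ⊆ recessionCone K := by
  intro x hx y hy t ht
  rcases ht.eq_or_lt with rfl | ht
  · simpa using hy
  · exact hcl.add_smul_mem_of_convex_of_smul_subset hconv hscale hx hy ht

theorem supportFn_le_coe_iff {n : ℕ} {K : Set (EuclideanSpace ℝ (Fin n))}
    {u : EuclideanSpace ℝ (Fin n)} {a : ℝ} :
    supportFn K u ≤ a ↔ ∀ x ∈ K, ⟪u, x⟫ ≤ a := by
  simp [supportFn, sSup_le_iff]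

theorem inner_le_neg_mul_norm_of_closedBall_subset {E : Type*} [NormedAddCommGroup E]
    [InnerProductSpace ℝ E] {u x : E} {ε : ℝ} (hε : 0 ≤ ε)
    (hball : ∀ v ∈ Metric.closedBall u ε, ⟪v, x⟫ ≤ 0) : ⟪u, x⟫ ≤ -(ε * ‖x‖) := by
  rcases eq_or_ne x 0 with rfl | hx
  · simp
  have hxn : 0 < ‖x‖ := norm_pos_iff.mpr hx
  have hv : u + (ε / ‖x‖) • x ∈ Metric.closedBall u ε := by
    rw [mem_closedBall_iff_norm, add_sub_cancel_left, norm_smul, Real.norm_of_nonneg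
      (by positivity), div_mul_cancel₀ ε hxn.ne']
  have := hball _ hv
  rw [inner_add_left, real_inner_smul_left, real_inner_self_eq_norm_sq] at this
  have hε' : ε / ‖x‖ * ‖x‖ ^ 2 = ε * ‖x‖ := by field_simp
  linarith

theorem exists_pos_le_norm_of_isClosed {E : Type*} [SeminormedAddCommGroup E] {K : Set E}
    (hcl : IsClosed K) (h0 : (0 : E) ∉ K) : ∃ r > 0, ∀ x ∈ K, r ≤ ‖x‖ := by
  obtain ⟨r, hr, hball⟩ := Metric.isOpen_iff.mp hcl.isOpen_compl 0 h0
  exact ⟨r, hr, fun x hx => not_lt.mp fun hlt => hball (mem_ball_zero_iff.mpr hlt) hx⟩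

/-- For a `C`-pseudo-cone `K`, the support function `h_K` is non-positive
on `C°` and strictly negative on `int C°`. -/
theorem supportFn_nonpos_on_dualCone_and_neg_on_interior {n : ℕ}
    (C K : Set (EuclideanSpace ℝ (Fin n))) (hK : IsCPseudoCone C K) :
    (∀ u ∈ dualCone C, supportFn K u ≤ (0 : EReal)) ∧
      (∀ u ∈ interior (dualCone C), supportFn K u < (0 : EReal)) := by
  obtain ⟨-, ⟨-, hcl, hconv, h0, hscale⟩, hrec⟩ := hK
  have hKC : K ⊆ C := hrec ▸ subset_recessionCone hcl hconv hscale
  refine ⟨fun u hu => ?_, fun u hu => ?_⟩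
  · exact EReal.coe_zero ▸ supportFn_le_coe_iff.mpr fun x hx => hu x (hKC hx)
  obtain ⟨ε, hε, hball⟩ := Metric.nhds_basis_closedBall.mem_iff.mp (mem_interior_iff_mem_nhds.mp hu)
  obtain ⟨r, hr, hrK⟩ := exists_pos_le_norm_of_isClosed hcl h0
  have hbound : ∀ x ∈ K, ⟪u, x⟫ ≤ -(ε * r) := fun x hx =>
    (inner_le_neg_mul_norm_of_closedBall_subset hε.le fun v hv => hball hv x (hKC hx)).trans
      (neg_le_neg (mul_le_mul_of_nonneg_left (hrK x hx) hε.le))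
  calc supportFn K u ≤ ((-(ε * r) : ℝ) : EReal) := supportFn_le_coe_iff.mpr hbound
    _ < 0 := EReal.coe_neg'.mpr (by nlinarith)
end
end

section
/- Let K be a C-pseudo-cone in ℝⁿ. For every x ∈ ℝⁿ \ C, the Legendre transform of h̃_K at x is infinite: sup{⟨x,u⟩ - h̃_K(u) : u ∈ ℝⁿ} = ∞. -/
open Set Pointwise RealInnerProductSpace

noncomputable section

open Classical in
/-- The modified support function `h̃`: equal to `-½ h_L(u)²` for `u` in the cone `D`,
and `∞` outside `D`. (For `u ∈ D` the support function is real, so `toReal` is faithful.) -/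
def tildeSupport {n : ℕ} (D L : Set (EuclideanSpace ℝ (Fin n)))
    (u : EuclideanSpace ℝ (Fin n)) : EReal :=
  if u ∈ D then (((-(1 / 2) * ((supportFn L u).toReal) ^ 2 : ℝ)) : EReal) else ⊤

/-- The Legendre transform of an `EReal`-valued function on `ℝⁿ`. -/
def legendreTransform {n : ℕ} (f : EuclideanSpace ℝ (Fin n) → EReal)
    (x : EuclideanSpace ℝ (Fin n)) : EReal :=
  ⨆ u : EuclideanSpace ℝ (Fin n), (((⟪x, u⟫ : ℝ) : EReal) - f u)

/-- For a `C`-pseudo-cone `K` and `x ∉ C`, the Legendre transform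
of `h̃_K` at `x` is infinite. -/
theorem legendre_tildeSupport_eq_top {n : ℕ}
    (C K : Set (EuclideanSpace ℝ (Fin n))) (hK : IsCPseudoCone C K)
    (x : EuclideanSpace ℝ (Fin n)) (hx : x ∉ C) :
    legendreTransform (tildeSupport (dualCone C) K) x = ⊤ := by
  obtain ⟨⟨hCcl, hCconv, hCcone, hCint, -⟩, -, -⟩ := hK
  obtain ⟨c, hc⟩ := hCint
  have hcC : c ∈ C := interior_subset hc
  have h0C : (0 : EuclideanSpace ℝ (Fin n)) ∈ C := by
    have := hCcone 0 le_rfl (Set.smul_mem_smul_set hcC : (0:ℝ) • c ∈ (0:ℝ) • C)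
    simpa using this
  obtain ⟨f, s, hfs, hsx⟩ := geometric_hahn_banach_closed_point hCconv hCcl hx
  set v := (InnerProductSpace.toDual ℝ (EuclideanSpace ℝ (Fin n))).symm f with hv
  have hvf : ∀ y, ⟪v, y⟫ = f y := fun y => InnerProductSpace.toDual_symm_apply
  have hs0 : 0 < s := by have := hfs 0 h0C; simpa using this
  have hvC : ∀ y ∈ C, ⟪v, y⟫ ≤ 0 := by
    intro y hy
    rw [hvf]
    by_contra hpos
    push_neg at hpos
    have ht : (s / f y) • y ∈ C :=
      hCcone (s / f y) (le_of_lt (div_pos hs0 hpos)) (Set.smul_mem_smul_set hy)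
    have h2 := hfs _ ht
    rw [map_smul] at h2
    simp only [smul_eq_mul] at h2
    rw [div_mul_cancel₀ _ (ne_of_gt hpos)] at h2
    exact lt_irrefl s h2
  have hxv : 0 < ⟪x, v⟫ := by
    rw [real_inner_comm, hvf]; exact lt_trans hs0 hsx
  rw [legendreTransform, iSup_eq_top]
  intro b hb
  set t : ℝ := max b.toReal 0 + 1 with ht
  have htpos : 0 < t := by positivity
  set u := (t / ⟪x, v⟫) • v with hu
  have htv : 0 ≤ t / ⟪x, v⟫ := le_of_lt (div_pos htpos hxv)
  have huD : u ∈ dualCone C := by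
    intro y hy
    rw [hu, real_inner_smul_left]
    exact mul_nonpos_of_nonneg_of_nonpos htv (hvC y hy)
  have hxu : ⟪x, u⟫ = t := by
    rw [hu, real_inner_smul_right, div_mul_cancel₀ _ (ne_of_gt hxv)]
  have hts : tildeSupport (dualCone C) K u
      = ((-(1/2) * ((supportFn K u).toReal)^2 : ℝ) : EReal) := by
    rw [tildeSupport, if_pos huD]
  refine ⟨u, ?_⟩
  rw [hts, hxu, ← EReal.coe_sub]
  have h1 : b.toReal < t := by
    have := le_max_left b.toReal 0
    simp only [ht]; linarith
  have hle : b.toReal < t - (-(1/2) * ((supportFn K u).toReal)^2) := by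
    nlinarith [sq_nonneg ((supportFn K u).toReal)]
  calc b ≤ (b.toReal : EReal) := EReal.le_coe_toReal (ne_of_lt hb)
    _ < _ := EReal.coe_lt_coe_iff.mpr hle
end
end

section
/- Let K be a C-pseudo-cone in ℝⁿ that is smooth and strictly convex inside int C. Then for every x ∈ ∂K ∩ int C there exists exactly one vector x* ∈ ℝⁿ such that (x, x*) is a crucial pair of K, and this vector x* lies in int C°. -/
open Set Pointwise RealInnerProductSpace

noncomputable section

/-- `H` is a supporting hyperplane of `K`: `H = {y : ⟨u,y⟩ = c}` for some `u ≠ 0`, with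
`K` on the side `⟨u,·⟩ ≤ c` and `H` touching `K`. -/
def IsSuppHyperplane {n : ℕ} (K H : Set (EuclideanSpace ℝ (Fin n))) : Prop :=
  ∃ (u : EuclideanSpace ℝ (Fin n)) (c : ℝ), u ≠ 0 ∧ H = {y | ⟪u, y⟫ = c} ∧
    (∀ y ∈ K, ⟪u, y⟫ ≤ c) ∧ ∃ y ∈ K, ⟪u, y⟫ = c

/-- `K` is smooth inside `int C`: each boundary point of `K` lying in `int C` is contained
in a unique supporting hyperplane of `K`. -/
def SmoothInside {n : ℕ} (K C : Set (EuclideanSpace ℝ (Fin n))) : Prop :=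
  ∀ x ∈ frontier K ∩ interior C,
    ∃! H : Set (EuclideanSpace ℝ (Fin n)), IsSuppHyperplane K H ∧ x ∈ H

/-- `K` is strictly convex inside `int C`: each boundary point of `K` lying in `int C`
admits a supporting hyperplane meeting `K` only in that point. -/
def StrictlyConvexInside {n : ℕ} (K C : Set (EuclideanSpace ℝ (Fin n))) : Prop :=
  ∀ x ∈ frontier K ∩ interior C,
    ∃ H : Set (EuclideanSpace ℝ (Fin n)), IsSuppHyperplane K H ∧ H ∩ K = {x}

/-- `(x, xs)` is a crucial pair of `K`: `x ∈ ∂K`, `xs` is an outer normal vector of `K`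
at `x`, and `⟨x, xs⟩ = -1`. -/
def IsCrucialPair {n : ℕ} (K : Set (EuclideanSpace ℝ (Fin n)))
    (x xs : EuclideanSpace ℝ (Fin n)) : Prop :=
  x ∈ frontier K ∧ (∀ y ∈ K, ⟪xs, y - x⟫ ≤ (0 : ℝ)) ∧ ⟪x, xs⟫ = (-1 : ℝ)

/-- If a `C`-pseudo-cone `K` is smooth and strictly convex inside `int C`,
then every `x ∈ ∂K ∩ int C` has exactly one `x*` with `(x, x*)` a crucial pair of `K`,
and this `x*` lies in `int C°`. -/
theorem existsUnique_crucialPair {n : ℕ}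
    (C K : Set (EuclideanSpace ℝ (Fin n))) (hK : IsCPseudoCone C K)
    (hsm : SmoothInside K C) (hsc : StrictlyConvexInside K C) :
    ∀ x ∈ frontier K ∩ interior C,
      ∃ xs : EuclideanSpace ℝ (Fin n), IsCrucialPair K x xs ∧
        xs ∈ interior (dualCone C) ∧
        ∀ y : EuclideanSpace ℝ (Fin n), IsCrucialPair K x y → y = xs := by
  intro x hx
  obtain ⟨hxK, hxC⟩ := hx
  obtain ⟨hCcone, hKpc, hrec⟩ := hK
  obtain ⟨hKne, hKcl, hKcx, h0K, hlam⟩ := hKpc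
  have hxmem : x ∈ K := hKcl.frontier_subset hxK
  obtain ⟨H, hH, hHK⟩ := hsc x ⟨hxK, hxC⟩
  have hxH : x ∈ H := by
    have hxx : x ∈ H ∩ K := by rw [hHK]; exact rfl
    exact hxx.1
  obtain ⟨H₀, hH₀, huniq⟩ := hsm x ⟨hxK, hxC⟩
  have hHuniq : ∀ H', IsSuppHyperplane K H' → x ∈ H' → H' = H := by
    intro H' h1 h2
    rw [huniq H' ⟨h1, h2⟩, ← huniq H ⟨hH, hxH⟩]
  obtain ⟨u, c, hu0, hHeq, hbound, y₀, hy₀K, hy₀⟩ := hH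
  have hux : ⟪u, x⟫ = c := by rw [hHeq] at hxH; exact hxH
  have h2x : (2:ℝ) • x ∈ K := hlam 2 one_le_two (smul_mem_smul_set hxmem)
  have hc0 : c ≤ 0 := by
    have h := hbound _ h2x
    rw [real_inner_smul_right, hux] at h; linarith
  have hcne : c ≠ 0 := by
    intro hc
    have h2xH : (2:ℝ) • x ∈ H := by
      rw [hHeq]; simp only [mem_setOf_eq, real_inner_smul_right, hux, hc]; ring
    have h2s : (2:ℝ) • x ∈ ({x} : Set (EuclideanSpace ℝ (Fin n))) := by
      rw [← hHK]; exact ⟨h2xH, h2x⟩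
    have h2e : (2:ℝ) • x = x := mem_singleton_iff.mp h2s
    rw [two_smul] at h2e
    have hx0 : x = 0 := by
      have := add_eq_left.mp h2e
      exact this
    rw [hx0] at hxmem
    exact h0K hxmem
  have hclt : c < 0 := lt_of_le_of_ne hc0 hcne
  have hncpos : (0:ℝ) < -c := by linarith
  set xs : EuclideanSpace ℝ (Fin n) := (-c)⁻¹ • u with hxs_def
  have hxxs : ⟪x, xs⟫ = (-1:ℝ) := by
    rw [hxs_def, real_inner_smul_right, real_inner_comm, hux]
    field_simp
  have hxsx : ⟪xs, x⟫ = (-1:ℝ) := by rw [real_inner_comm]; exact hxxs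
  have houter : ∀ y ∈ K, ⟪xs, y - x⟫ ≤ (0:ℝ) := by
    intro y hy
    have h1 : ⟪u, y⟫ ≤ c := hbound y hy
    have h2 : ⟪xs, y - x⟫ = (-c)⁻¹ * (⟪u, y⟫ - c) := by
      rw [hxs_def, real_inner_smul_left, inner_sub_right, hux]
    rw [h2]
    have h3 : (0:ℝ) < (-c)⁻¹ := by positivity
    nlinarith
  have hcrucial : IsCrucialPair K x xs := ⟨hxK, houter, hxxs⟩
  -- H as the hyperplane of xs at level -1
  have hHxs : H = {z | ⟪xs, z⟫ = (-1:ℝ)} := by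
    rw [hHeq]; ext z
    simp only [mem_setOf_eq, hxs_def, real_inner_smul_left]
    constructor
    · intro h; rw [h]; field_simp
    · intro h
      have h4 : (-c) * ((-c)⁻¹ * ⟪u, z⟫) = (-c) * (-1) := by rw [h]
      rw [← mul_assoc, mul_inv_cancel₀ (by linarith : (-c:ℝ) ≠ 0), one_mul] at h4
      linarith
  -- strict negativity on C \ {0}
  have hneg : ∀ v ∈ C, v ≠ 0 → ⟪xs, v⟫ < 0 := by
    intro v hv hv0
    have hvrec : v ∈ recessionCone K := by rw [hrec]; exact hv
    have hvK : x + v ∈ K := by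
      have := hvrec x hxmem 1 zero_le_one
      simpa using this
    have hle : ⟪xs, v⟫ ≤ 0 := by
      have := houter (x + v) hvK
      simpa using this
    rcases hle.lt_or_eq with h | h
    · exact h
    · exfalso
      have hxvH : x + v ∈ H := by
        rw [hHxs]
        simp only [mem_setOf_eq, inner_add_right, hxsx, h]
        ring
      have hxvs : x + v ∈ ({x} : Set (EuclideanSpace ℝ (Fin n))) := by
        rw [← hHK]; exact ⟨hxvH, hvK⟩
      have := mem_singleton_iff.mp hxvs
      exact hv0 (add_eq_left.mp this)
  -- xs in interior of dual cone
  have hdual : xs ∈ interior (dualCone C) := by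
    by_cases hCtriv : ∀ v ∈ C, v = (0 : EuclideanSpace ℝ (Fin n))
    · have hdu : dualCone C = univ := by
        ext p; simp only [dualCone, mem_setOf_eq, mem_univ, iff_true]
        intro v hv; rw [hCtriv v hv]; simp
      rw [hdu, interior_univ]; exact mem_univ _
    · push_neg at hCtriv
      obtain ⟨v0, hv0C, hv00⟩ := hCtriv
      obtain ⟨hCcl, hCcx, hCcone', hCint, hCpoint⟩ := hCcone
      set S := C ∩ Metric.sphere (0 : EuclideanSpace ℝ (Fin n)) 1 with hSdef
      have hScpt : IsCompact S := (isCompact_sphere 0 1).inter_left hCcl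
      have hSne : S.Nonempty := by
        refine ⟨‖v0‖⁻¹ • v0, hCcone' _ (by positivity) (smul_mem_smul_set hv0C), ?_⟩
        simp [norm_smul, norm_ne_zero_iff.mpr hv00]
      have hfc : Continuous fun t : EuclideanSpace ℝ (Fin n) => (⟪xs, t⟫ : ℝ) :=
        continuous_const.inner continuous_id
      obtain ⟨w, hwS, hwmax⟩ := hScpt.exists_isMaxOn hSne hfc.continuousOn
      have hw0 : w ≠ 0 := by
        intro h
        have h2 := hwS.2
        rw [h] at h2
        simp at h2
      have hwneg : ⟪xs, w⟫ < 0 := hneg w hwS.1 hw0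
      refine mem_interior.mpr ⟨Metric.ball xs (-⟪xs, w⟫), ?_, Metric.isOpen_ball,
        Metric.mem_ball_self (by linarith)⟩
      intro p hp v hv
      by_cases hv0 : v = 0
      · simp [hv0]
      · have hnv : (0:ℝ) < ‖v‖ := norm_pos_iff.mpr hv0
        have hvS : ‖v‖⁻¹ • v ∈ S :=
          ⟨hCcone' _ (by positivity) (smul_mem_smul_set hv), by
            simp [norm_smul, ne_of_gt hnv]⟩
        have h1 : ⟪xs, ‖v‖⁻¹ • v⟫ ≤ ⟪xs, w⟫ := hwmax hvS
        have h2 : ⟪p - xs, ‖v‖⁻¹ • v⟫ ≤ ‖p - xs‖ := by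
          calc ⟪p - xs, ‖v‖⁻¹ • v⟫ ≤ ‖p - xs‖ * ‖‖v‖⁻¹ • v‖ := real_inner_le_norm _ _
          _ = ‖p - xs‖ := by
              rw [norm_smul]
              simp [abs_of_pos (inv_pos.mpr hnv), inv_mul_cancel₀ (ne_of_gt hnv)]
        have hdist : ‖p - xs‖ < -⟪xs, w⟫ := by
          rw [← dist_eq_norm]; exact Metric.mem_ball.mp hp
        have h3 : ⟪p, ‖v‖⁻¹ • v⟫ ≤ 0 := by
          have heq : ⟪p, ‖v‖⁻¹ • v⟫ = ⟪xs, ‖v‖⁻¹ • v⟫ + ⟪p - xs, ‖v‖⁻¹ • v⟫ := by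
            rw [← inner_add_left]; congr 1; abel
          rw [heq]; linarith
        have h4 : ⟪p, v⟫ = ‖v‖ * ⟪p, ‖v‖⁻¹ • v⟫ := by
          rw [real_inner_smul_right, ← mul_assoc, mul_inv_cancel₀ (ne_of_gt hnv), one_mul]
        rw [h4]
        exact mul_nonpos_of_nonneg_of_nonpos (le_of_lt hnv) h3
  refine ⟨xs, hcrucial, hdual, ?_⟩
  -- uniqueness
  intro y hy
  obtain ⟨_, hyout, hyx⟩ := hy
  have hyx' : ⟪y, x⟫ = (-1:ℝ) := by rw [real_inner_comm]; exact hyx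
  have hy0 : y ≠ 0 := by
    intro h; rw [h] at hyx'; simp at hyx'
  have hHy : IsSuppHyperplane K {z | ⟪y, z⟫ = (-1:ℝ)} := by
    refine ⟨y, -1, hy0, rfl, ?_, x, hxmem, hyx'⟩
    intro z hz
    have := hyout z hz
    rw [inner_sub_right] at this
    linarith [hyx'.ge, hyx'.le, this]
  have hHyH : {z | ⟪y, z⟫ = (-1:ℝ)} = H := hHuniq _ hHy hyx'
  rw [hHxs] at hHyH
  -- conclude y = xs from hyperplane equality
  have hxs0 : xs ≠ 0 := by
    intro h; rw [h] at hxxs; simp at hxxs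
  have hnxs : (0:ℝ) < ⟪xs, xs⟫ := by
    rw [real_inner_self_eq_norm_sq]
    have : ‖xs‖ ≠ 0 := norm_ne_zero_iff.mpr hxs0
    positivity
  have hker : ∀ wv : EuclideanSpace ℝ (Fin n), ⟪xs, wv⟫ = 0 → ⟪y, wv⟫ = 0 := by
    intro wv hwv
    have hmem : x + wv ∈ {z | ⟪xs, z⟫ = (-1:ℝ)} := by
      simp only [mem_setOf_eq, inner_add_right, hxsx, hwv]; ring
    rw [← hHyH] at hmem
    have : ⟪y, x + wv⟫ = -1 := hmem
    rw [inner_add_right, hyx'] at this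
    linarith
  set a : ℝ := ⟪xs, y - xs⟫ / ⟪xs, xs⟫ with ha
  set wv : EuclideanSpace ℝ (Fin n) := (y - xs) - a • xs with hwv
  have hwv0 : ⟪xs, wv⟫ = 0 := by
    rw [hwv, inner_sub_right, real_inner_smul_right, ha,
      div_mul_cancel₀ _ (ne_of_gt hnxs), sub_self]
  have hy_wv : ⟪y, wv⟫ = 0 := hker wv hwv0
  have hxs_wv : ⟪xs, wv⟫ = 0 := hwv0
  have hwvnorm : ⟪wv, wv⟫ = 0 := by
    have h7 := real_inner_smul_left xs wv a
    have h6 : ⟪wv, wv⟫ = ⟪y - xs, wv⟫ - a * ⟪xs, wv⟫ := by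
      nth_rewrite 1 [hwv]
      rw [inner_sub_left, h7]
    rw [h6, inner_sub_left, hy_wv, hxs_wv]; ring
  have hwvz : wv = 0 := inner_self_eq_zero.mp hwvnorm
  have hy_eq : y = xs + a • xs := by
    have : (y - xs) - a • xs = 0 := hwvz
    have h7 : y - xs = a • xs := by
      rw [sub_eq_zero] at this; exact this
    rw [← h7]; abel
  have hax : ⟪x, y⟫ = -(1 + a) := by
    rw [hy_eq, inner_add_right, hxxs, real_inner_smul_right, hxxs]; ring
  rw [real_inner_comm] at hyx'
  rw [hax] at hyx'
  have ha0 : a = 0 := by linarith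
  rw [hy_eq, ha0, zero_smul, add_zero]
end
end

section
/- Let K be a C-pseudo-cone in ℝⁿ that is smooth and strictly convex inside int C. Then the support function h_{K*} of the copolar set K* is differentiable at every point of int C. -/
open Set Pointwise RealInnerProductSpace

noncomputable section

/-!
Near a point `x₀ ∈ int C` the function `y ↦ h_{K*}(y)` is the maximum of the linear functions
`⟪·, u⟫`, `u ∈ K*`. Since `K* ⊆ C°` and `y` stays inside `int C`, the maximum is attained on a
compact part of `K*`; a maximizer `u` at `y` is the outer normal of `K` at the boundary point
`y / (-⟪y, u⟫)`, so smoothness of `K` makes it unique. By compactness the maximizer then depends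
continuously on `y` at `x₀`, and for maximizers `u` at `x₀` and `v` at `y` one has
`0 ≤ h(y) - h(x₀) - ⟪u, y - x₀⟫ ≤ ⟪y - x₀, v - u⟫`, so `u` is the gradient of `h` at `x₀`.
-/

open Filter Topology Metric

theorem nonpos_of_forall_add_mul_le {a b c : ℝ} (h : ∀ t : ℝ, 0 ≤ t → a + t * b ≤ c) : b ≤ 0 := by
  by_contra! hb
  have h' := h ((|c - a| + 1) / b) (by positivity)
  rw [div_mul_cancel₀ _ hb.ne'] at h'
  linarith [le_abs_self (c - a)]

section InnerProductSpace

variable {E : Type*} [NormedAddCommGroup E] [InnerProductSpace ℝ E]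

theorem exists_inner_lt_of_notMem [CompleteSpace E] {s : Set E} {x : E} (hconv : Convex ℝ s)
    (hcl : IsClosed s) (hx : x ∉ s) : ∃ (a : E) (c : ℝ), (∀ y ∈ s, ⟪a, y⟫ < c) ∧ c < ⟪a, x⟫ := by
  obtain ⟨f, c, hs, hx⟩ := geometric_hahn_banach_closed_point hconv hcl hx
  exact ⟨(InnerProductSpace.toDual ℝ E).symm f, c, by simpa using hs, by simpa using hx⟩

theorem eq_of_setOf_inner_eq_neg_one {a b : E} (ha : a ≠ 0)
    (h : {z | ⟪a, z⟫ = -1} = {z | ⟪b, z⟫ = -1}) : a = b := by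
  have ha' : ‖a‖ ^ 2 ≠ 0 := by positivity
  -- `w - ((⟪a, w⟫ + 1) / ‖a‖²) • a` is the projection of `w` onto the hyperplane.
  have key : ∀ w, ⟪b, w⟫ - (⟪a, w⟫ + 1) / ‖a‖ ^ 2 * ⟪b, a⟫ = -1 := fun w => by
    have hmem : w - ((⟪a, w⟫ + 1) / ‖a‖ ^ 2) • a ∈ {z | ⟪a, z⟫ = -1} := by
      simp only [mem_ofPred_eq, inner_sub_right, real_inner_smul_right, real_inner_self_eq_norm_sq]
      field_simp
      ring
    rw [h] at hmem
    simpa [inner_sub_right, real_inner_smul_right] using hmem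
  have hba : ⟪b, a⟫ = ‖a‖ ^ 2 := by
    have := key 0
    simp only [inner_zero_right, zero_add, zero_sub] at this
    field_simp at this
    linarith
  refine ext_inner_right ℝ fun w => ?_
  have := key w
  rw [hba, div_mul_cancel₀ _ ha'] at this
  linarith

theorem mem_frontier_of_isMaxOn_inner {s : Set E} {u x : E} (hu : u ≠ 0) (hx : x ∈ s)
    (hmax : IsMaxOn (inner ℝ u) s x) : x ∈ frontier s := by
  refine ⟨subset_closure hx, fun hint => ?_⟩
  have htend : Tendsto (fun t : ℝ => x + t • u) (𝓝[>] 0) (𝓝 x) := by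
    have : Tendsto (fun t : ℝ => x + t • u) (𝓝 0) (𝓝 (x + (0 : ℝ) • u)) :=
      (continuous_const.add (continuous_id.smul continuous_const)).tendsto 0
    simpa using this.mono_left nhdsWithin_le_nhds
  obtain ⟨t, hts, ht⟩ :=
    ((htend.eventually (mem_interior_iff_mem_nhds.1 hint)).and self_mem_nhdsWithin).exists
  have h := isMaxOn_iff.1 hmax _ hts
  simp only [inner_add_right, real_inner_smul_right, real_inner_self_eq_norm_sq] at h
  have : 0 < t * ‖u‖ ^ 2 := mul_pos ht (by positivity)
  linarith

theorem smul_mem_interior_of_smul_subset {C : Set E} (hC : ∀ lam : ℝ, 0 ≤ lam → lam • C ⊆ C)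
    {t : ℝ} (ht : 0 < t) {y : E} (hy : y ∈ interior C) : t • y ∈ interior C :=
  interior_mono (hC t ht.le) (by rw [interior_smul₀ ht.ne']; exact smul_mem_smul_set hy)

theorem abs_inner_sub_inner_sub_inner_le {x y u v : E} (hy : ⟪y, u⟫ ≤ ⟪y, v⟫)
    (hx : ⟪x, v⟫ ≤ ⟪x, u⟫) : |⟪y, v⟫ - ⟪x, u⟫ - ⟪u, y - x⟫| ≤ ‖y - x‖ * ‖v - u‖ := by
  have hexp : ⟪y - x, v - u⟫ = ⟪y, v⟫ - ⟪x, v⟫ - ⟪y, u⟫ + ⟪x, u⟫ := by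
    simp only [inner_sub_left, inner_sub_right]
    ring
  have hcs := real_inner_le_norm (y - x) (v - u)
  have hnn := mul_nonneg (norm_nonneg (y - x)) (norm_nonneg (v - u))
  rw [inner_sub_right, real_inner_comm y u, real_inner_comm x u, abs_le]
  constructor <;> linarith

theorem hasFDerivAt_inner_of_isMaxOn {S : Set E} {U : E → E} {x₀ : E}
    (hU : ∀ᶠ y in 𝓝 x₀, U y ∈ S ∧ IsMaxOn (inner ℝ y) S (U y)) (hc : ContinuousAt U x₀) :
    HasFDerivAt (fun y => ⟪y, U y⟫) (innerSL ℝ (U x₀)) x₀ := by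
  obtain ⟨hx₀S, hx₀max⟩ := hU.self_of_nhds
  refine .of_isLittleO <| Asymptotics.isLittleO_iff.2 fun ε hε => ?_
  filter_upwards [hU, hc.eventually_mem (closedBall_mem_nhds _ hε)] with y ⟨hyS, hymax⟩ hyε
  rw [innerSL_apply_apply, Real.norm_eq_abs, mul_comm]
  calc _ ≤ ‖y - x₀‖ * ‖U y - U x₀‖ :=
        abs_inner_sub_inner_sub_inner_le (isMaxOn_iff.1 hymax _ hx₀S) (isMaxOn_iff.1 hx₀max _ hyS)
    _ ≤ ‖y - x₀‖ * ε := by gcongr; rwa [← dist_eq_norm, ← mem_closedBall]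

theorem isClosed_setOf_isMaxOn_inner {S : Set E} (hS : IsClosed S) :
    IsClosed {p : E × E | p.2 ∈ S ∧ IsMaxOn (inner ℝ p.1) S p.2} := by
  simp only [ofPred_and, isMaxOn_iff, ofPred_forall]
  exact (hS.preimage continuous_snd).inter <|
    isClosed_biInter fun v _ => isClosed_le (by fun_prop) (by fun_prop)

theorem continuousAt_of_isMaxOn_inner [ProperSpace E] {S : Set E} (hS : IsClosed S)
    {U : E → E} {x₀ : E} {R : ℝ} (hU : ∀ᶠ y in 𝓝 x₀, U y ∈ S ∧ IsMaxOn (inner ℝ y) S (U y))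
    (hR : ∀ᶠ y in 𝓝 x₀, ‖U y‖ ≤ R) (huniq : ∀ u ∈ S, IsMaxOn (inner ℝ x₀) S u → u = U x₀) :
    ContinuousAt U x₀ := by
  suffices Tendsto (fun y => (y, U y)) (𝓝 x₀) (𝓝 (x₀, U x₀)) from
    (continuous_snd.tendsto _).comp this
  refine ((isCompact_closedBall x₀ 1).prod (isCompact_closedBall 0 R)
    ).tendsto_nhds_of_unique_mapClusterPt ?_ ?_
  · filter_upwards [closedBall_mem_nhds x₀ one_pos, hR] with y hy hyR
    exact ⟨hy, mem_closedBall_zero_iff.2 hyR⟩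
  · rintro ⟨a, u⟩ - hclus
    obtain ⟨huS, humax⟩ := (isClosed_setOf_isMaxOn_inner hS).mem_of_mapClusterPt hclus hU
    have ha : ClusterPt a (𝓝 x₀) := by
      simpa [MapClusterPt, Function.comp_def] using hclus.tendsto_comp (continuous_fst.tendsto _)
    obtain rfl : a = x₀ := by
      by_contra hne
      exact ha.ne (disjoint_nhds_nhds.2 hne).eq_bot
    rw [huniq u huS humax]

end InnerProductSpace

section PseudoCone

variable {n : ℕ} {C K S : Set (EuclideanSpace ℝ (Fin n))} {u w x y z : EuclideanSpace ℝ (Fin n)}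

theorem isClosed_copolar (K : Set (EuclideanSpace ℝ (Fin n))) : IsClosed (copolar K) := by
  simp only [copolar, ofPred_forall]
  exact isClosed_biInter fun x _ => isClosed_le (by fun_prop) continuous_const

theorem zero_notMem_copolar (hK : K.Nonempty) : 0 ∉ copolar K := fun h => by
  obtain ⟨x, hx⟩ := hK
  have := h x hx
  rw [inner_zero_left] at this
  norm_num at this

theorem copolar_subset_dualCone_recessionCone (hK : K.Nonempty) :
    copolar K ⊆ dualCone (recessionCone K) := by
  intro u hu c hc
  obtain ⟨x, hx⟩ := hK
  exact nonpos_of_forall_add_mul_le fun t ht => by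
    simpa [inner_add_right, real_inner_smul_right] using hu _ (hc x hx t ht)

theorem inv_neg_smul_mem_copolar {a : EuclideanSpace ℝ (Fin n)} {c : ℝ} (hc : c < 0)
    (h : ∀ x ∈ K, ⟪a, x⟫ ≤ c) : (-c)⁻¹ • a ∈ copolar K := fun x hx => by
  rw [real_inner_smul_left, inv_mul_le_iff₀ (neg_pos.2 hc)]
  linarith [h x hx]

theorem copolar_nonempty (hK : IsPseudoCone K) : (copolar K).Nonempty := by
  obtain ⟨-, hcl, hconv, h0, -⟩ := hK
  obtain ⟨a, c, haK, hc⟩ := exists_inner_lt_of_notMem hconv hcl h0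
  rw [inner_zero_right] at hc
  exact ⟨_, inv_neg_smul_mem_copolar hc fun x hx => (haK x hx).le⟩

theorem mem_of_forall_inner_copolar_le (hK : IsPseudoCone K)
    (hz : ∀ v ∈ copolar K, ⟪v, z⟫ ≤ -1) : z ∈ K := by
  obtain ⟨w, hw⟩ := copolar_nonempty hK
  obtain ⟨-, hcl, hconv, -, hscale⟩ := hK
  by_contra hzK
  -- Separate `z` from `K`; by scaling `⟪a, ·⟫ ≤ 0` on `K`. Either `a` normalises into `K*`, or
  -- tilting `w ∈ K*` far enough towards `a` gives an element of `K*` violating `hz`.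
  obtain ⟨a, c, haK, haz⟩ := exists_inner_lt_of_notMem hconv hcl hzK
  have ha : ∀ x ∈ K, ⟪a, x⟫ ≤ 0 := fun x hx => nonpos_of_forall_add_mul_le (c := c) fun t ht => by
    have := haK _ (hscale (1 + t) (by linarith) (smul_mem_smul_set hx))
    rw [real_inner_smul_right, add_mul, one_mul] at this
    linarith
  rcases lt_or_ge c 0 with hc | hc
  · have := hz _ (inv_neg_smul_mem_copolar hc fun x hx => (haK x hx).le)
    rw [real_inner_smul_left, inv_mul_le_iff₀ (neg_pos.2 hc)] at this
    linarith
  · have haz' : 0 < ⟪a, z⟫ := hc.trans_lt haz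
    have ht : 0 ≤ (|⟪w, z⟫| + 1) / ⟪a, z⟫ := by positivity
    have hmem : w + ((|⟪w, z⟫| + 1) / ⟪a, z⟫) • a ∈ copolar K := fun x hx => by
      rw [inner_add_left, real_inner_smul_left]
      nlinarith [hw x hx, ha x hx]
    have := hz _ hmem
    rw [inner_add_left, real_inner_smul_left, div_mul_cancel₀ _ haz'.ne'] at this
    linarith [neg_abs_le ⟪w, z⟫]

theorem mul_norm_le_neg_inner {ε : ℝ} (hε : 0 ≤ ε) (hball : closedBall y ε ⊆ C)
    (hu : u ∈ dualCone C) : ε * ‖u‖ ≤ -⟪y, u⟫ := by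
  rcases eq_or_ne u 0 with rfl | hu0
  · simp
  have hnorm : ‖u‖ ≠ 0 := norm_ne_zero_iff.2 hu0
  have hmem : y + (ε / ‖u‖) • u ∈ C := hball <| by
    rw [mem_closedBall, dist_eq_norm, add_sub_cancel_left, norm_smul, Real.norm_eq_abs,
      abs_div, abs_norm, abs_of_nonneg hε, div_mul_cancel₀ _ hnorm]
  have h := hu _ hmem
  rw [inner_add_right, real_inner_smul_right, real_inner_self_eq_norm_sq, real_inner_comm] at h
  have : ε / ‖u‖ * ‖u‖ ^ 2 = ε * ‖u‖ := by field_simp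
  linarith

theorem inner_neg_of_mem_interior (hy : y ∈ interior C) (hu : u ∈ dualCone C) (hu0 : u ≠ 0) :
    ⟪y, u⟫ < 0 := by
  obtain ⟨ε, hε, hball⟩ := nhds_basis_closedBall.mem_iff.1 (mem_interior_iff_mem_nhds.1 hy)
  have := mul_norm_le_neg_inner hε.le hball hu
  nlinarith [mul_pos hε (norm_pos_iff.2 hu0)]

theorem exists_isMaxOn_inner (hS : IsClosed S) (hSne : S.Nonempty) (hSC : S ⊆ dualCone C)
    {ε : ℝ} (hε : 0 < ε) (hball : closedBall y ε ⊆ C) : ∃ u ∈ S, IsMaxOn (inner ℝ y) S u := by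
  obtain ⟨w, hw⟩ := hSne
  refine ContinuousOn.exists_isMaxOn' (by fun_prop) hS hw ?_
  filter_upwards [(tendsto_norm_cocompact_atTop.eventually_ge_atTop (-⟪y, w⟫ / ε)).filter_mono
    inf_le_left, mem_inf_of_right (mem_principal_self S)] with u hu huS
  have := mul_norm_le_neg_inner hε.le hball (hSC huS)
  rw [div_le_iff₀ hε] at hu
  linarith

theorem norm_le_of_isMaxOn_inner (hSC : S ⊆ dualCone C) {ε : ℝ} (hε : 0 < ε)
    (hball : closedBall y ε ⊆ C) (hu : u ∈ S) (hmax : IsMaxOn (inner ℝ y) S u) (hw : w ∈ S) :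
    ‖u‖ ≤ ‖y‖ * ‖w‖ / ε := by
  rw [le_div_iff₀ hε]
  have h₁ := mul_norm_le_neg_inner hε.le hball (hSC hu)
  have h₂ := isMaxOn_iff.1 hmax w hw
  have h₃ := neg_le_of_abs_le (abs_real_inner_le_norm y w)
  linarith

theorem supportFn_eq_of_isMaxOn (hu : u ∈ S) (hmax : IsMaxOn (inner ℝ y) S u) :
    supportFn S y = ⟪y, u⟫ :=
  IsGreatest.csSup_eq ⟨mem_image_of_mem _ hu,
    forall_mem_image.2 fun v hv => EReal.coe_le_coe_iff.2 (isMaxOn_iff.1 hmax v hv)⟩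

theorem IsCrucialPair.inner_eq (h : IsCrucialPair K x u) : ⟪u, x⟫ = -1 := by
  rw [real_inner_comm]
  exact h.2.2

theorem IsCrucialPair.ne_zero (h : IsCrucialPair K x u) : u ≠ 0 := by
  rintro rfl
  simpa using h.inner_eq

theorem IsCrucialPair.isSuppHyperplane (h : IsCrucialPair K x u) (hKcl : IsClosed K) :
    IsSuppHyperplane K {z | ⟪u, z⟫ = -1} := by
  refine ⟨u, -1, h.ne_zero, rfl, fun z hz => ?_, x, hKcl.frontier_subset h.1, h.inner_eq⟩
  have := h.2.1 z hz
  rw [inner_sub_right, h.inner_eq] at this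
  linarith

theorem SmoothInside.eq_of_isCrucialPair (hsm : SmoothInside K C) (hKcl : IsClosed K)
    (hx : x ∈ interior C) {u₁ u₂ : EuclideanSpace ℝ (Fin n)} (h₁ : IsCrucialPair K x u₁)
    (h₂ : IsCrucialPair K x u₂) : u₁ = u₂ := by
  obtain ⟨H, -, hH⟩ := hsm x ⟨h₁.1, hx⟩
  exact eq_of_setOf_inner_eq_neg_one h₁.ne_zero
    ((hH _ ⟨h₁.isSuppHyperplane hKcl, h₁.inner_eq⟩).trans
      (hH _ ⟨h₂.isSuppHyperplane hKcl, h₂.inner_eq⟩).symm)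

theorem IsCPseudoCone.copolar_subset_dualCone (hK : IsCPseudoCone C K) :
    copolar K ⊆ dualCone C :=
  hK.2.2 ▸ copolar_subset_dualCone_recessionCone hK.2.1.1

theorem inner_neg_of_mem_copolar (hK : IsCPseudoCone C K) (hy : y ∈ interior C)
    (hu : u ∈ copolar K) : ⟪y, u⟫ < 0 :=
  inner_neg_of_mem_interior hy (hK.copolar_subset_dualCone hu)
    fun h => zero_notMem_copolar hK.2.1.1 (h ▸ hu)

theorem isCrucialPair_of_isMaxOn_copolar (hK : IsCPseudoCone C K) (hy : y ∈ interior C)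
    (hu : u ∈ copolar K) (hmax : IsMaxOn (inner ℝ y) (copolar K) u) :
    IsCrucialPair K ((-⟪y, u⟫)⁻¹ • y) u := by
  have hs : 0 < -⟪y, u⟫ := neg_pos.2 (inner_neg_of_mem_copolar hK hy hu)
  have hxu : ⟪u, (-⟪y, u⟫)⁻¹ • y⟫ = -1 := by
    rw [real_inner_smul_right, real_inner_comm y u, inv_mul_eq_iff_eq_mul₀ hs.ne']
    ring
  have hxK : (-⟪y, u⟫)⁻¹ • y ∈ K := mem_of_forall_inner_copolar_le hK.2.1 fun v hv => by
    rw [real_inner_smul_right, inv_mul_le_iff₀ hs]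
    linarith [isMaxOn_iff.1 hmax v hv, real_inner_comm v y]
  have hnormal : ∀ z ∈ K, ⟪u, z - (-⟪y, u⟫)⁻¹ • y⟫ ≤ 0 := fun z hz => by
    rw [inner_sub_right, hxu]
    linarith [hu z hz]
  have hu0 : u ≠ 0 := fun h => zero_notMem_copolar hK.2.1.1 (h ▸ hu)
  refine ⟨mem_frontier_of_isMaxOn_inner hu0 hxK (isMaxOn_iff.2 fun z hz => ?_), hnormal, ?_⟩
  · linarith [hnormal z hz, inner_sub_right (𝕜 := ℝ) u z ((-⟪y, u⟫)⁻¹ • y)]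
  · rw [real_inner_comm, hxu]

theorem eq_of_isMaxOn_copolar (hK : IsCPseudoCone C K) (hsm : SmoothInside K C)
    (hy : y ∈ interior C) {u₁ u₂ : EuclideanSpace ℝ (Fin n)} (hu₁ : u₁ ∈ copolar K)
    (hmax₁ : IsMaxOn (inner ℝ y) (copolar K) u₁) (hu₂ : u₂ ∈ copolar K)
    (hmax₂ : IsMaxOn (inner ℝ y) (copolar K) u₂) : u₁ = u₂ := by
  have heq : ⟪y, u₁⟫ = ⟪y, u₂⟫ :=
    le_antisymm (isMaxOn_iff.1 hmax₂ _ hu₁) (isMaxOn_iff.1 hmax₁ _ hu₂)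
  have h₂ := isCrucialPair_of_isMaxOn_copolar hK hy hu₂ hmax₂
  rw [← heq] at h₂
  have hx : (-⟪y, u₁⟫)⁻¹ • y ∈ interior C := smul_mem_interior_of_smul_subset hK.1.2.2.1
    (inv_pos.2 (neg_pos.2 (inner_neg_of_mem_copolar hK hy hu₁))) hy
  exact hsm.eq_of_isCrucialPair hK.2.1.2.1 hx (isCrucialPair_of_isMaxOn_copolar hK hy hu₁ hmax₁) h₂

end PseudoCone

theorem supportFn_copolar_differentiableOn_general {n : ℕ}
    (C K : Set (EuclideanSpace ℝ (Fin n))) (hK : IsCPseudoCone C K)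
    (hsm : SmoothInside K C) :
    ∀ x ∈ interior C,
      DifferentiableAt ℝ (fun y => (supportFn (copolar K) y).toReal) x := by
  intro x₀ hx₀
  have hdual := hK.copolar_subset_dualCone
  obtain ⟨ε, hε, hball⟩ := nhds_basis_closedBall.mem_iff.1 (mem_interior_iff_mem_nhds.1 hx₀)
  have hε₂ : 0 < ε / 2 := half_pos hε
  have hballs : ∀ y ∈ ball x₀ (ε / 2), closedBall y (ε / 2) ⊆ C := fun y hy =>
    (closedBall_subset_closedBall' (by linarith [mem_ball.1 hy])).trans hball
  choose! U hUS hUmax using fun y hy =>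
    exists_isMaxOn_inner (isClosed_copolar K) (copolar_nonempty hK.2.1) hdual hε₂ (hballs y hy)
  have hU : ∀ᶠ y in 𝓝 x₀, U y ∈ copolar K ∧ IsMaxOn (inner ℝ y) (copolar K) (U y) :=
    eventually_of_mem (ball_mem_nhds x₀ hε₂) fun y hy => ⟨hUS y hy, hUmax y hy⟩
  have hR : ∀ᶠ y in 𝓝 x₀, ‖U y‖ ≤ (‖x₀‖ + ε) * ‖U x₀‖ / (ε / 2) := by
    filter_upwards [ball_mem_nhds x₀ hε₂] with y hy
    refine (norm_le_of_isMaxOn_inner hdual hε₂ (hballs y hy) (hUS y hy) (hUmax y hy)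
      (hUS x₀ (mem_ball_self hε₂))).trans ?_
    have : ‖y‖ ≤ ‖x₀‖ + ε := by
      linarith [norm_le_norm_add_norm_sub' y x₀, mem_ball_iff_norm.1 hy]
    gcongr
  have hcont : ContinuousAt U x₀ := continuousAt_of_isMaxOn_inner (isClosed_copolar K) hU hR
    fun u hu hmax => eq_of_isMaxOn_copolar hK hsm hx₀ hu hmax hU.self_of_nhds.1 hU.self_of_nhds.2
  refine ((hasFDerivAt_inner_of_isMaxOn hU hcont).congr_of_eventuallyEq ?_).differentiableAt
  filter_upwards [hU] with y hy
  rw [supportFn_eq_of_isMaxOn hy.1 hy.2, EReal.toReal_coe]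

/-- If a `C`-pseudo-cone `K` is smooth and strictly convex inside `int C`,
then the support function of `K*` (which is real-valued on `int C`, whence `toReal`)
is differentiable at every point of `int C`. -/
theorem supportFn_copolar_differentiableOn {n : ℕ}
    (C K : Set (EuclideanSpace ℝ (Fin n))) (hK : IsCPseudoCone C K)
    (hsm : SmoothInside K C) (hsc : StrictlyConvexInside K C) :
    ∀ x ∈ interior C,
      DifferentiableAt ℝ (fun y => (supportFn (copolar K) y).toReal) x :=
  supportFn_copolar_differentiableOn_general C K hK hsm
end
end

section
/- Let K be a C-pseudo-cone in ℝⁿ that is smooth and strictly convex inside int C. Let F(x) = max{λ > 0 : x ∈ λK} for x ∈ int C, and let H(y) = max{λ > 0 : y ∈ λK*} for y ∈ int C°. If (x, x*) is a crucial pair of K with x ∈ int C, then F(x) = H(x*). -/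
open Set Pointwise RealInnerProductSpace

noncomputable section

/-- Let `K` be a `C`-pseudo-cone, smooth and strictly convex inside `int C`.
If `(x, x*)` is a crucial pair of `K` with `x ∈ int C`, then the gauge values coincide:
`F(x) = H(x*)`, where `F(x) = max{λ > 0 : x ∈ λK}` and `H(y) = max{λ > 0 : y ∈ λK*}`. -/
theorem gauge_eq_gauge_copolar_of_crucialPair {n : ℕ}
    (C K : Set (EuclideanSpace ℝ (Fin n))) (hK : IsCPseudoCone C K)
    (hsm : SmoothInside K C) (hsc : StrictlyConvexInside K C)
    (x xs : EuclideanSpace ℝ (Fin n)) (hcp : IsCrucialPair K x xs)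
    (hx : x ∈ interior C)
    (Fx Hxs : ℝ)
    (hF : IsGreatest {lam : ℝ | 0 < lam ∧ x ∈ lam • K} Fx)
    (hH : IsGreatest {lam : ℝ | 0 < lam ∧ xs ∈ lam • copolar K} Hxs) :
    Fx = Hxs := by
  obtain ⟨hfr, hnorm, hinner⟩ := hcp
  have hKcl : IsClosed K := hK.2.1.2.1
  have hxK : x ∈ K := by
    have := frontier_subset_closure hfr
    rwa [hKcl.closure_eq] at this
  have hxni : x ∉ interior K := hfr.2
  have hrec : recessionCone K = C := hK.2.2
  -- Fx = 1
  have hF1 : Fx = 1 := by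
    obtain ⟨⟨hFpos, hxFK⟩, hFub⟩ := hF
    have h1mem : (1 : ℝ) ∈ {lam : ℝ | 0 < lam ∧ x ∈ lam • K} := by
      refine ⟨one_pos, ?_⟩
      rw [one_smul]; exact hxK
    have hge : (1 : ℝ) ≤ Fx := hFub h1mem
    rcases lt_or_eq_of_le hge with hlt | heq
    · exfalso
      obtain ⟨k, hkK, hkx⟩ := hxFK
      have hFne : Fx ≠ 0 := ne_of_gt hFpos
      have hk : k = Fx⁻¹ • x := by
        rw [← hkx, ← smul_assoc, smul_eq_mul, inv_mul_cancel₀ hFne, one_smul]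
      set t : ℝ := 1 - Fx⁻¹ with ht
      have hFinv : Fx⁻¹ < 1 := by
        rw [inv_lt_one_iff₀]; right; exact hlt
      have htpos : 0 < t := sub_pos.mpr hFinv
      apply hxni
      rw [mem_interior]
      refine ⟨(fun y => k + t • y) '' interior C, ?_, ?_, ?_⟩
      · rintro _ ⟨y, hy, rfl⟩
        have hyC : y ∈ C := interior_subset hy
        rw [← hrec] at hyC
        exact hyC k hkK t htpos.le
      · exact ((isOpenMap_add_left k).comp (isOpenMap_smul₀ (ne_of_gt htpos))) _ isOpen_interior
      · refine ⟨x, hx, ?_⟩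
        show k + t • x = x
        rw [hk, ht, ← add_smul]
        have h1 : Fx⁻¹ + (1 - Fx⁻¹) = 1 := by ring
        rw [h1, one_smul]
    · exact heq.symm
  -- Hxs = 1
  have hH1 : Hxs = 1 := by
    obtain ⟨⟨hHpos, hxsHK⟩, hHub⟩ := hH
    have hxscp : xs ∈ copolar K := by
      intro y hy
      have h1 : ⟪xs, y - x⟫ ≤ (0 : ℝ) := hnorm y hy
      have h2 : ⟪xs, x⟫ = (-1 : ℝ) := by rw [real_inner_comm]; exact hinner
      have := inner_sub_right (𝕜 := ℝ) xs y x
      linarith [h1, inner_sub_right (𝕜 := ℝ) xs y x ▸ h1]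
    have h1mem : (1 : ℝ) ∈ {lam : ℝ | 0 < lam ∧ xs ∈ lam • copolar K} := by
      refine ⟨one_pos, ?_⟩
      rw [one_smul]; exact hxscp
    have hge : (1 : ℝ) ≤ Hxs := hHub h1mem
    obtain ⟨u, huK, hux⟩ := hxsHK
    have hle : Hxs ≤ 1 := by
      have hu : ⟪u, x⟫ ≤ (-1 : ℝ) := huK x hxK
      have h2 : ⟪xs, x⟫ = (-1 : ℝ) := by rw [real_inner_comm]; exact hinner
      have h3 : ⟪xs, x⟫ = Hxs * ⟪u, x⟫ := by
        rw [← hux, real_inner_smul_left]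
      nlinarith
    linarith
  rw [hF1, hH1]
end
end

section
/- Let K be a C-pseudo-cone in ℝⁿ that is smooth and strictly convex inside int C, with gauge function F = -h_{K*} restricted to int C, and assume F is twice continuously differentiable on int C. For x ∈ int C let G(x) be the n×n matrix with entries G_{ij}(x) = ½ ∂²F²/∂xⁱ∂xʲ (x). Then for every x ∈ ∂K ∩ int C, the unique vector x* such that (x, x*) is a crucial pair of K satisfies x* = -G(x)x. -/
open Set Pointwise RealInnerProductSpace

noncomputable section

/-!
Since `x* ∈ K*`, the gauge satisfies `F ≤ ⟨-x*, ·⟩` wherever `F > 0`, with equality at `x`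
(where `F x = 1`); so `F - ⟨-x*, ·⟩` has a local maximum at `x`, and the gradient of `½F²`
at `x` is `F x • ∇F x = -x*`. As `½F²` is positively homogeneous of degree two, its gradient
is homogeneous of degree one, and Euler's relation (with the symmetry of the Hessian) turns
`G(x) x` into that gradient.
-/

open Filter Topology

section Calculus

variable {E G : Type*} [NormedAddCommGroup E] [NormedSpace ℝ E]
  [NormedAddCommGroup G] [NormedSpace ℝ G]

lemma fderiv_eq_of_eventuallyLE_of_eq {f g : E → ℝ} {x : E} (hf : DifferentiableAt ℝ f x)
    (hg : DifferentiableAt ℝ g x) (hle : f ≤ᶠ[𝓝 x] g) (heq : f x = g x) :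
    fderiv ℝ f x = fderiv ℝ g x := by
  have hmax : IsLocalMax (fun y => f y - g y) x := by
    filter_upwards [hle] with y hy
    rw [heq, sub_self]
    linarith
  exact sub_eq_zero.1 (hmax.hasFDerivAt_eq_zero (hf.hasFDerivAt.sub hg.hasFDerivAt))

lemma smul_fderiv_smul_eq_of_comp_smul {g : E → G} {x : E} {t c : ℝ}
    (hg : DifferentiableAt ℝ g (t • x)) (hhom : ∀ y, g (t • y) = c • g y) :
    t • fderiv ℝ g (t • x) = c • fderiv ℝ g x := by
  have hcomp : HasFDerivAt (fun y => g (t • y)) ((fderiv ℝ g (t • x)).comp (t • .id ℝ E)) x :=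
    hg.hasFDerivAt.comp x ((hasFDerivAt_id x).const_smul t)
  have hscaled : fderiv ℝ (fun y => g (t • y)) x = c • fderiv ℝ g x := by
    rw [funext hhom]
    exact congrFun (fderiv_const_smul_field c) x
  rw [← hscaled, hcomp.fderiv]
  ext v
  simp

/-- Euler's relation for degree-one homogeneity along the ray through `x`. -/
lemma fderiv_apply_self_of_eventually_smul {φ : E → G} {x : E} (hφ : DifferentiableAt ℝ φ x)
    (hhom : ∀ᶠ t in 𝓝 (1 : ℝ), φ (t • x) = t • φ x) : fderiv ℝ φ x x = φ x := by
  have hray : HasDerivAt (fun t : ℝ => t • x) x 1 := by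
    simpa using (hasDerivAt_id (1 : ℝ)).smul_const x
  have hcomp : HasDerivAt (fun t : ℝ => φ (t • x)) (fderiv ℝ φ x x) 1 :=
    hφ.hasFDerivAt.comp_hasDerivAt_of_eq (1 : ℝ) hray (one_smul ℝ x).symm
  have hlin : HasDerivAt (fun t : ℝ => φ (t • x)) (φ x) 1 := by
    simpa using ((hasDerivAt_id (1 : ℝ)).smul_const (φ x)).congr_of_eventuallyEq hhom
  exact hcomp.unique hlin

lemma fderiv_fderiv_apply_self_of_homogeneous_two {g : E → G} {x : E}
    (hg : ∀ᶠ y in 𝓝 x, DifferentiableAt ℝ g y) (hg' : DifferentiableAt ℝ (fderiv ℝ g) x)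
    (hhom : ∀ t : ℝ, 0 < t → ∀ y, g (t • y) = t ^ 2 • g y) :
    fderiv ℝ (fderiv ℝ g) x x = fderiv ℝ g x := by
  refine fderiv_apply_self_of_eventually_smul hg' ?_
  have hray : ∀ᶠ t in 𝓝 (1 : ℝ), DifferentiableAt ℝ g (t • x) :=
    ((continuous_id.smul continuous_const).tendsto' 1 x (one_smul ℝ x)).eventually hg
  filter_upwards [hray, lt_mem_nhds one_pos] with t htx ht
  have := smul_fderiv_smul_eq_of_comp_smul htx (hhom t ht)
  rw [pow_two, mul_smul] at this
  exact smul_right_injective _ ht.ne' this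

lemma sum_fderiv_fderiv_single_mul {ι : Type*} [Fintype ι] [DecidableEq ι]
    {g : EuclideanSpace ℝ ι → ℝ} {x : EuclideanSpace ℝ ι} (hg : ContDiffAt ℝ 2 g x) (i : ι) :
    ∑ j, fderiv ℝ (fun y => fderiv ℝ g y (EuclideanSpace.single j 1)) x
        (EuclideanSpace.single i 1) * x j =
      fderiv ℝ (fderiv ℝ g) x x (EuclideanSpace.single i 1) := by
  have hd : DifferentiableAt ℝ (fderiv ℝ g) x :=
    (hg.fderiv_right (m := 1) (by norm_num)).differentiableAt one_ne_zero
  have hsymm : IsSymmSndFDerivAt ℝ g x := hg.isSymmSndFDerivAt (by simp)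
  have hpartial : ∀ v w, fderiv ℝ (fun y => fderiv ℝ g y v) x w =
      fderiv ℝ (fderiv ℝ g) x w v := fun v w => by
    simp [fderiv_clm_apply hd (differentiableAt_const v)]
  have hx : ∑ j, x j • EuclideanSpace.single j (1 : ℝ) = x := by
    simpa using (EuclideanSpace.basisFun ι ℝ).sum_repr x
  calc _ = ∑ j, x j * fderiv ℝ (fderiv ℝ g) x (EuclideanSpace.single j 1)
        (EuclideanSpace.single i 1) := by
        simp only [hpartial, hsymm (EuclideanSpace.single i 1), mul_comm]
    _ = fderiv ℝ (fderiv ℝ g) x (∑ j, x j • EuclideanSpace.single j 1)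
        (EuclideanSpace.single i 1) := by
        simp [map_sum]
    _ = _ := by rw [hx]

end Calculus

section SupportFunction

variable {n : ℕ}

lemma supportFn_smul_le (S : Set (EuclideanSpace ℝ (Fin n))) {t : ℝ} (ht : 0 ≤ t)
    (y : EuclideanSpace ℝ (Fin n)) : supportFn S (t • y) ≤ t * supportFn S y := by
  refine sSup_le ?_
  rintro _ ⟨u, hu, rfl⟩
  change ((⟪t • y, u⟫ : ℝ) : EReal) ≤ _
  rw [real_inner_smul_left, EReal.coe_mul]
  exact mul_le_mul_of_nonneg_left (le_sSup (mem_image_of_mem _ hu)) (EReal.coe_nonneg.2 ht)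

lemma supportFn_smul (S : Set (EuclideanSpace ℝ (Fin n))) {t : ℝ} (ht : 0 < t)
    (y : EuclideanSpace ℝ (Fin n)) : supportFn S (t • y) = t * supportFn S y := by
  refine le_antisymm (supportFn_smul_le S ht.le y) ?_
  calc (t : EReal) * supportFn S y = t * supportFn S (t⁻¹ • t • y) := by
        rw [inv_smul_smul₀ ht.ne']
    _ ≤ t * (t⁻¹ * supportFn S (t • y)) :=
        mul_le_mul_of_nonneg_left (supportFn_smul_le S (inv_nonneg.2 ht.le) _)
          (EReal.coe_nonneg.2 ht.le)
    _ = supportFn S (t • y) := by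
        rw [← mul_assoc, ← EReal.coe_mul, mul_inv_cancel₀ ht.ne', EReal.coe_one, one_mul]

lemma inner_le_toReal_supportFn {S : Set (EuclideanSpace ℝ (Fin n))}
    {u y : EuclideanSpace ℝ (Fin n)} (hu : u ∈ S) (htop : supportFn S y ≠ ⊤) :
    ⟪y, u⟫ ≤ (supportFn S y).toReal := by
  have hle : ((⟪y, u⟫ : ℝ) : EReal) ≤ supportFn S y := le_sSup (mem_image_of_mem _ hu)
  simpa using EReal.toReal_le_toReal hle (EReal.coe_ne_bot _) htop

lemma supportFn_copolar_le_neg_one {K : Set (EuclideanSpace ℝ (Fin n))}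
    {x : EuclideanSpace ℝ (Fin n)} (hx : x ∈ K) : supportFn (copolar K) x ≤ (-1 : ℝ) := by
  refine sSup_le ?_
  rintro _ ⟨u, hu, rfl⟩
  exact EReal.coe_le_coe_iff.2 (real_inner_comm x u ▸ hu x hx)

end SupportFunction

/-- The gauge `F = -h_{K*}`; `toReal` sends the infinite values of `h_{K*}` to `0`. -/
def pseudoConeGauge {n : ℕ} (K : Set (EuclideanSpace ℝ (Fin n)))
    (y : EuclideanSpace ℝ (Fin n)) : ℝ :=
  -(supportFn (copolar K) y).toReal

lemma pseudoConeGauge_smul {n : ℕ} (K : Set (EuclideanSpace ℝ (Fin n))) {t : ℝ} (ht : 0 < t)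
    (y : EuclideanSpace ℝ (Fin n)) :
    pseudoConeGauge K (t • y) = t * pseudoConeGauge K y := by
  simp only [pseudoConeGauge, supportFn_smul _ ht, EReal.toReal_mul, EReal.toReal_coe, mul_neg]

section Gauge

variable {n : ℕ} {K : Set (EuclideanSpace ℝ (Fin n))} {x xs : EuclideanSpace ℝ (Fin n)}

lemma IsCrucialPair.mem_copolar (h : IsCrucialPair K x xs) : xs ∈ copolar K := by
  intro y hy
  have hnormal := h.2.1 y hy
  have hx := h.2.2
  rw [inner_sub_right] at hnormal
  rw [real_inner_comm] at hx
  linarith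

lemma IsCrucialPair.pseudoConeGauge_eq_one (hK : IsClosed K) (h : IsCrucialPair K x xs) :
    pseudoConeGauge K x = 1 := by
  have hle := supportFn_copolar_le_neg_one (hK.frontier_subset h.1)
  have hge : ((⟪x, xs⟫ : ℝ) : EReal) ≤ supportFn (copolar K) x :=
    le_sSup (mem_image_of_mem _ h.mem_copolar)
  rw [h.2.2] at hge
  simp [pseudoConeGauge, le_antisymm hle hge]

lemma IsCrucialPair.pseudoConeGauge_le (h : IsCrucialPair K x xs)
    {y : EuclideanSpace ℝ (Fin n)} (hy : 0 < pseudoConeGauge K y) :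
    pseudoConeGauge K y ≤ ⟪-xs, y⟫ := by
  have htop : supportFn (copolar K) y ≠ ⊤ := by
    rintro htop
    simp [pseudoConeGauge, htop] at hy
  have := inner_le_toReal_supportFn (y := y) h.mem_copolar htop
  rw [inner_neg_left, real_inner_comm]
  unfold pseudoConeGauge
  linarith

lemma IsCrucialPair.fderiv_pseudoConeGauge (hK : IsClosed K) (h : IsCrucialPair K x xs)
    (hF : DifferentiableAt ℝ (pseudoConeGauge K) x) :
    fderiv ℝ (pseudoConeGauge K) x = innerSL ℝ (-xs) := by
  have hFx := h.pseudoConeGauge_eq_one hK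
  have hpos : ∀ᶠ y in 𝓝 x, 0 < pseudoConeGauge K y :=
    hF.continuousAt.eventually (lt_mem_nhds (hFx ▸ one_pos))
  refine (fderiv_eq_of_eventuallyLE_of_eq hF (innerSL ℝ (-xs)).differentiableAt
    (hpos.mono fun y => h.pseudoConeGauge_le) ?_).trans (innerSL ℝ (-xs)).fderiv
  simp [hFx, real_inner_comm x xs ▸ h.2.2]

end Gauge

theorem crucialPair_eq_neg_matrix_apply_general {n : ℕ}
    (C K : Set (EuclideanSpace ℝ (Fin n))) (hK : IsCPseudoCone C K)
    (hF2 : ContDiffOn ℝ 2 (fun y => -(supportFn (copolar K) y).toReal) (interior C)) :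
    ∀ x ∈ frontier K ∩ interior C,
      ∀ xs : EuclideanSpace ℝ (Fin n), IsCrucialPair K x xs →
        ∀ i : Fin n,
          xs i = -(∑ j : Fin n,
            (fderiv ℝ (fun y => fderiv ℝ
                (fun z => (1 / 2) * ((-(supportFn (copolar K) z).toReal) ^ 2)) y
                (EuclideanSpace.single j 1)) x (EuclideanSpace.single i 1)) * x j) := by
  intro x hx xs hxs i
  obtain ⟨-, ⟨-, hKclosed, -⟩, -⟩ := hK
  set F := pseudoConeGauge K
  have hF : ContDiffAt ℝ 2 F x := hF2.contDiffAt (isOpen_interior.mem_nhds hx.2)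
  have hFx : F x = 1 := hxs.pseudoConeGauge_eq_one hKclosed
  set g := fun z => 1 / 2 * F z ^ 2
  have hg : ContDiffAt ℝ 2 g x := contDiffAt_const.mul (hF.pow 2)
  have hDg : fderiv ℝ g x = innerSL ℝ (-xs) := by
    rw [(((hF.differentiableAt two_ne_zero).hasFDerivAt.pow 2).const_mul (1 / 2)).fderiv,
      hxs.fderiv_pseudoConeGauge hKclosed (hF.differentiableAt two_ne_zero),
      hFx, smul_smul]
    norm_num
  have hhom : ∀ t : ℝ, 0 < t → ∀ y, g (t • y) = t ^ 2 • g y := fun t ht y => by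
    have hFt : F (t • y) = t * F y := pseudoConeGauge_smul K ht y
    simp only [g, hFt, smul_eq_mul]
    ring
  have hEuler := fderiv_fderiv_apply_self_of_homogeneous_two
    ((hg.eventually (by simp)).mono fun y hy => hy.differentiableAt two_ne_zero)
    ((hg.fderiv_right (m := 1) (by norm_num)).differentiableAt one_ne_zero) hhom
  change xs i = -(∑ j, fderiv ℝ (fun y => fderiv ℝ g y (EuclideanSpace.single j 1)) x
    (EuclideanSpace.single i 1) * x j)
  rw [sum_fderiv_fderiv_single_mul hg, hEuler, hDg]
  simp [EuclideanSpace.inner_single_right]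

/-- Let `K` be a `C`-pseudo-cone, smooth and strictly convex inside `int C`,
whose gauge function `F = -h_{K*}` is twice continuously differentiable on `int C`.
With `G_{ij}(x) = ½ ∂²F²/∂xⁱ∂xʲ(x)`, for every `x ∈ ∂K ∩ int C` the unique `x*`
forming a crucial pair with `x` satisfies `x* = -G(x)x`. -/
theorem crucialPair_eq_neg_matrix_apply {n : ℕ}
    (C K : Set (EuclideanSpace ℝ (Fin n))) (hK : IsCPseudoCone C K)
    (hsm : SmoothInside K C) (hsc : StrictlyConvexInside K C)
    (hF2 : ContDiffOn ℝ 2 (fun y => -(supportFn (copolar K) y).toReal) (interior C)) :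
    ∀ x ∈ frontier K ∩ interior C,
      ∀ xs : EuclideanSpace ℝ (Fin n), IsCrucialPair K x xs →
        ∀ i : Fin n,
          xs i = -(∑ j : Fin n,
            (fderiv ℝ (fun y => fderiv ℝ
                (fun z => (1 / 2) * ((-(supportFn (copolar K) z).toReal) ^ 2)) y
                (EuclideanSpace.single j 1)) x (EuclideanSpace.single i 1)) * x j) :=
  crucialPair_eq_neg_matrix_apply_general C K hK hF2
end
end

section
/- Let U ⊆ ℝ^{n-1} be open, and let X : U → ℝⁿ \ {0} and N : U → ℝⁿ be continuously differentiable maps such that ‖N(u)‖ = 1 and ⟨N(u), ∂_α X(u)⟩ = 0 for all u ∈ U and all α = 1,…,n-1. Define N* = X/‖X‖. Then at every u ∈ U, det(N*, ∂₁N*, …, ∂_{n-1}N*) = ‖X‖^{-n} ⟨X,N⟩ det(N, ∂₁X, …, ∂_{n-1}X), where det(v₀, v₁, …, v_{n-1}) denotes the determinant of the n×n matrix with columns v₀, …, v_{n-1}. -/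
/-!
By the product rule, `∂_α N* = ‖X‖⁻¹ ∂_α X + d_α N*` for some scalars `d_α`; the multiples of the
first column `N*` do not change the determinant, which is therefore `‖X‖⁻ⁿ det(X, ∂₁X, …, ∂ₘX)`.
Writing `X = ⟨X, N⟩ N + (X - ⟨X, N⟩ N)`, the determinant with first column `X - ⟨X, N⟩ N`
vanishes, since all of its columns lie in the hyperplane `N⊥`.
-/

open Set RealInnerProductSpace

noncomputable section

/-- The determinant of the `n × n` matrix whose columns are `v 0, …, v (n-1)`. -/
def detCols {n : ℕ} (v : Fin n → EuclideanSpace ℝ (Fin n)) : ℝ :=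
  Matrix.det (Matrix.of fun i j => v j i)

/-- The partial derivative `∂_α f (u)` of a map between Euclidean spaces. -/
def pderiv' {m n : ℕ} (f : EuclideanSpace ℝ (Fin m) → EuclideanSpace ℝ (Fin n))
    (u : EuclideanSpace ℝ (Fin m)) (α : Fin m) : EuclideanSpace ℝ (Fin n) :=
  fderiv ℝ f u (EuclideanSpace.single α 1)

theorem detCols_eq_basisFun_det {n : ℕ} (v : Fin n → EuclideanSpace ℝ (Fin n)) :
    detCols v = (EuclideanSpace.basisFun (Fin n) ℝ).toBasis.det v := by
  rw [Module.Basis.det_apply]; rfl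

theorem detCols_eq_zero_of_forall_inner_eq_zero {n : ℕ} {v : Fin n → EuclideanSpace ℝ (Fin n)}
    {a : EuclideanSpace ℝ (Fin n)} (ha : a ≠ 0) (h : ∀ j, ⟪a, v j⟫ = (0 : ℝ)) :
    detCols v = 0 := by
  rw [detCols, ← Matrix.exists_vecMul_eq_zero_iff]
  refine ⟨a, fun h0 => ha (by ext i; simp [h0]), funext fun j => ?_⟩
  simpa [Matrix.vecMul, dotProduct, PiLp.inner_apply, mul_comm] using h j

theorem detCols_smul {n : ℕ} (c : ℝ) (v : Fin n → EuclideanSpace ℝ (Fin n)) :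
    detCols (c • v) = c ^ n * detCols v := by
  have h := Matrix.det_smul (Matrix.of fun i j => v j i) c
  rwa [Fintype.card_fin] at h

theorem detCols_cons_add_smul {m : ℕ} (x : EuclideanSpace ℝ (Fin (m + 1)))
    (w : Fin m → EuclideanSpace ℝ (Fin (m + 1))) (d : Fin m → ℝ) :
    detCols (Fin.cons x fun α => w α + d α • x) = detCols (Fin.cons x w) := by
  rw [detCols, detCols, ← Matrix.det_transpose, ← Matrix.det_transpose (Matrix.of _)]
  refine Matrix.det_eq_of_forall_row_eq_smul_add_const (Fin.cons 0 d) 0 rfl fun i j => ?_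
  cases i using Fin.cases <;> simp

theorem detCols_cons_eq_inner_mul {m : ℕ} {N : EuclideanSpace ℝ (Fin (m + 1))} (hN : ‖N‖ = 1)
    (x : EuclideanSpace ℝ (Fin (m + 1))) {w : Fin m → EuclideanSpace ℝ (Fin (m + 1))}
    (hw : ∀ α, ⟪N, w α⟫ = (0 : ℝ)) :
    detCols (Fin.cons x w) = ⟪x, N⟫ * detCols (Fin.cons N w) := by
  have hN0 : N ≠ 0 := norm_ne_zero_iff.1 (hN ▸ one_ne_zero)
  have hperp : detCols (Fin.cons (x - ⟪x, N⟫ • N) w) = 0 := by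
    refine detCols_eq_zero_of_forall_inner_eq_zero hN0 fun j => ?_
    cases j using Fin.cases with
    | zero => simp [inner_sub_right, inner_smul_right, real_inner_comm, hN]
    | succ α => simpa using hw α
  have hx : x = ⟪x, N⟫ • N + (x - ⟪x, N⟫ • N) := by abel
  simp only [detCols_eq_basisFun_det] at hperp ⊢
  set f := (EuclideanSpace.basisFun (Fin (m + 1)) ℝ).toBasis.det
  calc f (Fin.cons x w) = f (Matrix.vecCons (⟪x, N⟫ • N + (x - ⟪x, N⟫ • N)) w) := by
        rw [← hx]; rfl
    _ = ⟪x, N⟫ * f (Fin.cons N w) := by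
        rw [f.map_vecCons_add, f.map_vecCons_smul]
        simp only [Matrix.vecCons, hperp, add_zero, smul_eq_mul]

theorem pderiv'_smul {m n : ℕ} {f : EuclideanSpace ℝ (Fin m) → ℝ}
    {X : EuclideanSpace ℝ (Fin m) → EuclideanSpace ℝ (Fin n)} {u : EuclideanSpace ℝ (Fin m)}
    (hf : DifferentiableAt ℝ f u) (hX : DifferentiableAt ℝ X u) (α : Fin m) :
    pderiv' (fun v => f v • X v) u α
      = f u • pderiv' X u α + fderiv ℝ f u (EuclideanSpace.single α 1) • X u := by
  simp [pderiv', fderiv_fun_smul hf hX]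

theorem exists_pderiv'_inv_norm_smul_self {m n : ℕ}
    {X : EuclideanSpace ℝ (Fin m) → EuclideanSpace ℝ (Fin n)} {u : EuclideanSpace ℝ (Fin m)}
    (hX : DifferentiableAt ℝ X u) (hX0 : X u ≠ 0) :
    ∃ d : Fin m → ℝ, ∀ α, pderiv' (fun v => ‖X v‖⁻¹ • X v) u α
      = ‖X u‖⁻¹ • pderiv' X u α + d α • (‖X u‖⁻¹ • X u) := by
  have hnorm : ‖X u‖ ≠ 0 := norm_ne_zero_iff.2 hX0
  refine ⟨fun α => fderiv ℝ (fun v => ‖X v‖⁻¹) u (EuclideanSpace.single α 1) * ‖X u‖,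
    fun α => ?_⟩
  have hinv : DifferentiableAt ℝ (fun v => ‖X v‖⁻¹) u := (hX.norm ℝ hX0).inv hnorm
  rw [pderiv'_smul hinv hX, smul_smul, mul_inv_cancel_right₀ hnorm]

theorem det_normal_copolar_general {m : ℕ}
    (U : Set (EuclideanSpace ℝ (Fin m))) (hU : IsOpen U)
    (X N : EuclideanSpace ℝ (Fin m) → EuclideanSpace ℝ (Fin (m + 1)))
    (hX : ContDiffOn ℝ 1 X U)
    (hX0 : ∀ u ∈ U, X u ≠ 0)
    (hNnorm : ∀ u ∈ U, ‖N u‖ = 1)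
    (hOrth : ∀ u ∈ U, ∀ α : Fin m, ⟪N u, pderiv' X u α⟫ = (0 : ℝ)) :
    ∀ u ∈ U,
      detCols (Fin.cons (‖X u‖⁻¹ • X u)
          (fun α => pderiv' (fun v => ‖X v‖⁻¹ • X v) u α))
        = (‖X u‖ ^ (m + 1))⁻¹ * ⟪X u, N u⟫ *
            detCols (Fin.cons (N u) (fun α => pderiv' X u α)) := by
  intro u hu
  have hXu : DifferentiableAt ℝ X u :=
    (hX.contDiffAt (hU.mem_nhds hu)).differentiableAt one_ne_zero
  obtain ⟨d, hd⟩ := exists_pderiv'_inv_norm_smul_self hXu (hX0 u hu)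
  calc detCols (Fin.cons (‖X u‖⁻¹ • X u) (fun α => pderiv' (fun v => ‖X v‖⁻¹ • X v) u α))
      = detCols (‖X u‖⁻¹ • Fin.cons (X u) (fun α => pderiv' X u α)) := by
        simp_rw [hd, detCols_cons_add_smul]
        exact congrArg detCols (Matrix.smul_cons _ _ _).symm
    _ = (‖X u‖ ^ (m + 1))⁻¹ * ⟪X u, N u⟫ *
          detCols (Fin.cons (N u) (fun α => pderiv' X u α)) := by
        rw [detCols_smul, detCols_cons_eq_inner_mul (hNnorm u hu) _ (hOrth u hu), inv_pow,
          mul_assoc]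

/-- With `n = m + 1`: for `C¹` maps `X : U → ℝⁿ \ {0}` and `N : U → ℝⁿ`
with `‖N‖ = 1` and `⟨N, ∂_α X⟩ = 0` on the open set `U`, setting `N* = X/‖X‖`, one has
`det(N*, ∂₁N*, …, ∂ₘN*) = ‖X‖⁻ⁿ ⟨X,N⟩ det(N, ∂₁X, …, ∂ₘX)` on `U`. -/
theorem det_normal_copolar {m : ℕ}
    (U : Set (EuclideanSpace ℝ (Fin m))) (hU : IsOpen U)
    (X N : EuclideanSpace ℝ (Fin m) → EuclideanSpace ℝ (Fin (m + 1)))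
    (hX : ContDiffOn ℝ 1 X U) (hN : ContDiffOn ℝ 1 N U)
    (hX0 : ∀ u ∈ U, X u ≠ 0)
    (hNnorm : ∀ u ∈ U, ‖N u‖ = 1)
    (hOrth : ∀ u ∈ U, ∀ α : Fin m, ⟪N u, pderiv' X u α⟫ = (0 : ℝ)) :
    ∀ u ∈ U,
      detCols (Fin.cons (‖X u‖⁻¹ • X u)
          (fun α => pderiv' (fun v => ‖X v‖⁻¹ • X v) u α))
        = (‖X u‖ ^ (m + 1))⁻¹ * ⟪X u, N u⟫ *
            detCols (Fin.cons (N u) (fun α => pderiv' X u α)) :=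
  det_normal_copolar_general U hU X N hX hX0 hNnorm hOrth
end
end
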